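/- arXiv:2503.21472 — 3 statements merged into one kernel-verified Lean document; each statement's English description precedes it below -/
import Mathlib

section
/- Let 1 ≤ p < ∞ be a real number, s > 2, and C₀, C_p > 0. Let N ≥ 1 and let W be an N×N real symmetric random matrix whose entries satisfy E[ |w_{ik}|^p ] ≤ C_p · N^{−p/2} for all i, k. For 1 ≤ i ≤ k ≤ N let E_{ik} be the symmetric elementary matrix with (E_{ik})_{ik} = (E_{ik})_{ki} = 1 and all other entries 0, and let Φ be a linear map on N×N real symmetric matrices satisfying |(Φ[E_{ik}])_{ab}| ≤ C₀/(1 + (|i−a| + |k−b|)^s) for all 1 ≤ i ≤ k ≤ N and 1 ≤ a ≤ b ≤ N. Then there exists a constant C′ depending only on p, s, C₀, C_p (and not on N, a, b) such that the filtered matrix W̃ := Φ[W] satisfies E[ |w̃_{ab}|^p ] ≤ C′ · N^{−p/2} for all a, b ∈ {1, …, N}. -/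
open MeasureTheory Matrix

private lemma abs_cast_sub (m n : ℕ) : |(m:ℝ) - (n:ℝ)| = (Nat.dist m n : ℝ) := by
  rcases le_total m n with h | h
  · rw [Nat.dist_eq_sub_of_le h, Nat.cast_sub h, abs_sub_comm,
      abs_of_nonneg (sub_nonneg.2 (Nat.cast_le.2 h))]
  · rw [Nat.dist_eq_sub_of_le_right h, Nat.cast_sub h,
      abs_of_nonneg (sub_nonneg.2 (Nat.cast_le.2 h))]

private lemma summable_aux {t : ℝ} (ht : 1 < t) :
    Summable (fun d : ℕ => 1 / (1 + (d:ℝ) ^ t)) := by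
  rw [← summable_nat_add_iff 1]
  have h1 : Summable (fun d : ℕ => 1 / ((d:ℝ)) ^ t) := Real.summable_one_div_nat_rpow.2 ht
  have h2 : Summable (fun d : ℕ => 1 / (((d + 1 : ℕ)):ℝ) ^ t) := (summable_nat_add_iff 1).2 h1
  refine h2.of_nonneg_of_le (fun d => by positivity) (fun d => ?_)
  have hpos : (0:ℝ) < ((d + 1 : ℕ):ℝ) ^ t := by
    apply Real.rpow_pos_of_pos; positivity
  apply one_div_le_one_div_of_le hpos
  linarith

private lemma row_sum_aux {t : ℝ} (ht : 1 < t) (N : ℕ) (a : ℕ) :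
    ∑ i : Fin N, 1 / (1 + |((i:ℕ):ℝ) - (a:ℝ)| ^ t)
      ≤ 2 * ∑' d : ℕ, 1 / (1 + (d:ℝ) ^ t) := by
  have hsum := summable_aux ht
  have hnn : ∀ d : ℕ, 0 ≤ 1 / (1 + (d:ℝ) ^ t) := fun d => by positivity
  have key : ∀ s : Finset (Fin N),
      (∀ i ∈ s, ∀ j ∈ s, Nat.dist (i:ℕ) a = Nat.dist (j:ℕ) a → i = j) →
      ∑ i ∈ s, 1 / (1 + ((Nat.dist (i:ℕ) a : ℕ):ℝ) ^ t)
        ≤ ∑' d : ℕ, 1 / (1 + (d:ℝ) ^ t) := by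
    intro s hinj
    calc ∑ i ∈ s, 1 / (1 + ((Nat.dist (i:ℕ) a : ℕ):ℝ) ^ t)
        = ∑ d ∈ s.image (fun i : Fin N => Nat.dist (i:ℕ) a), 1 / (1 + (d:ℝ) ^ t) :=
          (Finset.sum_image (f := fun d : ℕ => 1 / (1 + (d:ℝ) ^ t)) hinj).symm
      _ ≤ ∑' d : ℕ, 1 / (1 + (d:ℝ) ^ t) := Summable.sum_le_tsum _ (fun d _ => hnn d) hsum
  have hrw : ∑ i : Fin N, 1 / (1 + |((i:ℕ):ℝ) - (a:ℝ)| ^ t)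
      = ∑ i : Fin N, 1 / (1 + ((Nat.dist (i:ℕ) a : ℕ):ℝ) ^ t) :=
    Finset.sum_congr rfl fun i _ => by rw [abs_cast_sub]
  rw [hrw, ← Finset.sum_filter_add_sum_filter_not Finset.univ (fun i : Fin N => a ≤ (i:ℕ))]
  have i1 : ∀ i ∈ Finset.univ.filter (fun i : Fin N => a ≤ (i:ℕ)),
      ∀ j ∈ Finset.univ.filter (fun i : Fin N => a ≤ (i:ℕ)),
      Nat.dist (i:ℕ) a = Nat.dist (j:ℕ) a → i = j := by
    intro i hi j hj h
    simp only [Finset.mem_filter, Finset.mem_univ, true_and] at hi hj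
    rw [Nat.dist_eq_sub_of_le_right hi, Nat.dist_eq_sub_of_le_right hj] at h
    exact Fin.ext (by omega)
  have i2 : ∀ i ∈ Finset.univ.filter (fun i : Fin N => ¬ a ≤ (i:ℕ)),
      ∀ j ∈ Finset.univ.filter (fun i : Fin N => ¬ a ≤ (i:ℕ)),
      Nat.dist (i:ℕ) a = Nat.dist (j:ℕ) a → i = j := by
    intro i hi j hj h
    simp only [Finset.mem_filter, Finset.mem_univ, true_and, not_le] at hi hj
    rw [Nat.dist_eq_sub_of_le hi.le, Nat.dist_eq_sub_of_le hj.le] at h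
    exact Fin.ext (by omega)
  have := add_le_add (key _ i1) (key _ i2)
  linarith

private lemma kernel_aux {s u v : ℝ} (hs : 2 < s) (hu : 0 ≤ u) (hv : 0 ≤ v) :
    1 / (1 + (u + v) ^ s) ≤ 4 / ((1 + u ^ (s/2)) * (1 + v ^ (s/2))) := by
  have hw : 0 ≤ u + v := by linarith
  have hs2 : (0:ℝ) ≤ s / 2 := by linarith
  have half : ∀ x : ℝ, 0 ≤ x → x ≤ u + v → x ^ (s/2) ≤ 1 + (u+v) ^ s := by
    intro x hx hxle
    have h1 : x ^ (s/2) ≤ (u+v) ^ (s/2) := Real.rpow_le_rpow hx hxle hs2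
    rcases le_total (u+v) 1 with hle | hle
    · have h2 := Real.rpow_le_one hw hle hs2
      have h0 : 0 ≤ (u+v) ^ s := Real.rpow_nonneg hw s
      linarith
    · have h2 := Real.rpow_le_rpow_of_exponent_le hle (by linarith : s/2 ≤ s)
      have h0 : (0:ℝ) ≤ 1 := zero_le_one
      linarith
  have hX := half u hu (by linarith)
  have hY := half v hv (by linarith)
  have hXY : u ^ (s/2) * v ^ (s/2) ≤ (u+v) ^ s := by
    have h1 : u * v ≤ (u+v)*(u+v) := by nlinarith
    calc u ^ (s/2) * v ^ (s/2) = (u*v) ^ (s/2) := (Real.mul_rpow hu hv).symm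
      _ ≤ ((u+v)*(u+v)) ^ (s/2) := Real.rpow_le_rpow (by positivity) h1 hs2
      _ = ((u+v) ^ ((2:ℕ):ℝ)) ^ (s/2) := by rw [Real.rpow_natCast]; ring_nf
      _ = (u+v) ^ (((2:ℕ):ℝ) * (s/2)) := (Real.rpow_mul hw _ _).symm
      _ = (u+v) ^ s := by rw [show ((2:ℕ):ℝ) * (s/2) = s by push_cast; ring]
  have hA : (0:ℝ) < 1 + (u+v) ^ s := by positivity
  have hB : (0:ℝ) < (1 + u ^ (s/2)) * (1 + v ^ (s/2)) := by positivity
  rw [div_le_div_iff₀ hA hB]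
  nlinarith [Real.rpow_nonneg hu (s/2), Real.rpow_nonneg hv (s/2), Real.rpow_nonneg hw s]

private lemma jensen_aux {ι : Type*} (s : Finset ι) (c x : ι → ℝ) {p : ℝ} (hp : 1 ≤ p)
    (hc : ∀ q ∈ s, 0 ≤ c q) (hx : ∀ q ∈ s, 0 ≤ x q) :
    (∑ q ∈ s, c q * x q) ^ p
      ≤ (∑ q ∈ s, c q) ^ (p - 1) * ∑ q ∈ s, c q * x q ^ p := by
  have hp0 : (0:ℝ) < p := by linarith
  rcases eq_or_lt_of_le (Finset.sum_nonneg hc) with hT | hT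
  · have hc0 : ∀ q ∈ s, c q = 0 :=
      fun q hq => (Finset.sum_eq_zero_iff_of_nonneg hc).1 hT.symm q hq
    have e1 : ∑ q ∈ s, c q * x q = 0 :=
      Finset.sum_eq_zero fun q hq => by rw [hc0 q hq, zero_mul]
    have e2 : ∑ q ∈ s, c q * x q ^ p = 0 :=
      Finset.sum_eq_zero fun q hq => by rw [hc0 q hq, zero_mul]
    rw [e1, e2, Real.zero_rpow hp0.ne', mul_zero]
  · set T := ∑ q ∈ s, c q with hTdef
    have h := Real.rpow_arith_mean_le_arith_mean_rpow s (fun q => c q / T) x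
      (fun q hq => div_nonneg (hc q hq) hT.le)
      (by rw [← Finset.sum_div]; exact div_self hT.ne') hx hp
    have e1 : ∑ q ∈ s, (c q / T) * x q = (∑ q ∈ s, c q * x q) / T := by
      rw [Finset.sum_div]; exact Finset.sum_congr rfl fun q _ => by ring
    have e2 : ∑ q ∈ s, (c q / T) * x q ^ p = (∑ q ∈ s, c q * x q ^ p) / T := by
      rw [Finset.sum_div]; exact Finset.sum_congr rfl fun q _ => by ring
    rw [e1, e2, Real.div_rpow
      (Finset.sum_nonneg fun q hq => mul_nonneg (hc q hq) (hx q hq)) hT.le] at h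
    rw [div_le_div_iff₀ (Real.rpow_pos_of_pos hT p) hT] at h
    have hTp : T ^ (p-1) * T = T ^ p := by
      have h2 := Real.rpow_add hT (p-1) 1
      rw [Real.rpow_one, show p - 1 + 1 = p by ring] at h2
      exact h2.symm
    have h3 : (∑ q ∈ s, c q * x q) ^ p * T
        ≤ ((T ^ (p-1)) * ∑ q ∈ s, c q * x q ^ p) * T := by
      calc (∑ q ∈ s, c q * x q) ^ p * T ≤ (∑ q ∈ s, c q * x q ^ p) * T ^ p := h
        _ = ((T ^ (p-1)) * ∑ q ∈ s, c q * x q ^ p) * T := by rw [← hTp]; ring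
    exact le_of_mul_le_mul_right h3 hT

private lemma decomp_aux {N : ℕ} (W : Matrix (Fin N) (Fin N) ℝ) (hW : W.IsSymm) :
    ∑ q ∈ Finset.univ.filter (fun q : Fin N × Fin N => (q.1:ℕ) ≤ (q.2:ℕ)),
      W q.1 q.2 • (Matrix.of fun x y =>
        if (x = q.1 ∧ y = q.2) ∨ (x = q.2 ∧ y = q.1) then (1:ℝ) else 0) = W := by
  ext x y
  rw [Matrix.sum_apply]
  simp only [Matrix.smul_apply, Matrix.of_apply, smul_eq_mul, mul_ite, mul_one, mul_zero]
  rcases le_or_gt (x:ℕ) (y:ℕ) with hxy | hxy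
  · rw [Finset.sum_eq_single (x, y)]
    · simp
    · rintro q hq hne
      simp only [Finset.mem_filter, Finset.mem_univ, true_and] at hq
      rw [if_neg]
      rintro (⟨h1, h2⟩ | ⟨h1, h2⟩)
      · exact hne (Prod.ext_iff.2 ⟨h1.symm, h2.symm⟩)
      · have hxeqy : x = y := Fin.ext (by rw [h1, h2] at hxy; omega)
        refine hne (Prod.ext_iff.2 ⟨?_, ?_⟩)
        · rw [← h2, hxeqy]
        · rw [← h1, hxeqy]
    · intro h
      exact absurd (Finset.mem_filter.2 ⟨Finset.mem_univ ((x, y) : Fin N × Fin N), hxy⟩) h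
  · rw [Finset.sum_eq_single (y, x)]
    · simp [hW.apply x y]
    · rintro q hq hne
      simp only [Finset.mem_filter, Finset.mem_univ, true_and] at hq
      rw [if_neg]
      rintro (⟨h1, h2⟩ | ⟨h1, h2⟩)
      · rw [← h1, ← h2] at hq; omega
      · exact hne (Prod.ext_iff.2 ⟨h2.symm, h1.symm⟩)
    · intro h
      exact absurd (Finset.mem_filter.2 ⟨Finset.mem_univ ((y, x) : Fin N × Fin N), hxy.le⟩) h


/-- Mean-field moment bounds are preserved by a local linear filtering: if the entries of a
real symmetric random matrix `W` satisfy `E|w_{ik}|^p ≤ C_p N^{-p/2}` and `Φ` is a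
symmetry-preserving linear map whose action on the elementary symmetric matrices `E_{ik}`
decays polynomially with exponent `s > 2`, then the entries of `Φ[W]` satisfy
`E|w̃_{ab}|^p ≤ C' N^{-p/2}` with `C'` depending only on `p, s, C₀, C_p`. -/
theorem filtered_entries_moment_bound
    (p s C₀ Cp : ℝ) (hp : 1 ≤ p) (hs : 2 < s) (hC₀ : 0 < C₀) (hCp : 0 < Cp) :
    ∃ C' > 0, ∀ (N : ℕ), 1 ≤ N →
      ∀ (Ω : Type) (_ : MeasurableSpace Ω) (μ : Measure Ω),
        IsProbabilityMeasure μ →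
        ∀ (W : Ω → Matrix (Fin N) (Fin N) ℝ),
          (∀ ω, (W ω).IsSymm) →
          (∀ i k : Fin N, Integrable (fun ω => |W ω i k| ^ p) μ) →
          (∀ i k : Fin N, ∫ ω, |W ω i k| ^ p ∂μ ≤ Cp * (N : ℝ) ^ (-(p / 2))) →
          ∀ (Φ : Matrix (Fin N) (Fin N) ℝ →ₗ[ℝ] Matrix (Fin N) (Fin N) ℝ),
            (∀ A : Matrix (Fin N) (Fin N) ℝ, A.IsSymm → (Φ A).IsSymm) →
            (∀ i k a b : Fin N, (i : ℕ) ≤ (k : ℕ) → (a : ℕ) ≤ (b : ℕ) →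
              |(Φ (Matrix.of fun x y =>
                  if (x = i ∧ y = k) ∨ (x = k ∧ y = i) then (1 : ℝ) else 0)) a b|
                ≤ C₀ / (1 + (|((i : ℕ) : ℝ) - ((a : ℕ) : ℝ)|
                    + |((k : ℕ) : ℝ) - ((b : ℕ) : ℝ)|) ^ s)) →
            ∀ a b : Fin N,
              ∫ ω, |(Φ (W ω)) a b| ^ p ∂μ ≤ C' * (N : ℝ) ^ (-(p / 2)) := by
  have ht2 : (1:ℝ) < s / 2 := by linarith
  set K : ℝ := ∑' d : ℕ, 1 / (1 + (d:ℝ) ^ (s/2)) with hKdef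
  have hK : 0 < K := by
    refine Summable.tsum_pos (summable_aux ht2) (fun d => by positivity) 0 ?_
    norm_num [Real.zero_rpow (by positivity : s/2 ≠ 0)]
  set S : ℝ := 4 * C₀ * (2 * K) * (2 * K) with hSdef
  have hS : 0 < S := by positivity
  refine ⟨S ^ p * Cp, mul_pos (Real.rpow_pos_of_pos hS p) hCp, ?_⟩
  intro N hN Ω inst μ hμ W hWsymm hWint hWmom Φ hΦsym hΦloc a b
  have main : ∀ a b : Fin N, (a:ℕ) ≤ (b:ℕ) →
      ∫ ω, |(Φ (W ω)) a b| ^ p ∂μ ≤ S ^ p * Cp * (N : ℝ) ^ (-(p / 2)) := by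
    clear a b
    intro a b hab
    set P : Finset (Fin N × Fin N) :=
      Finset.univ.filter (fun q : Fin N × Fin N => (q.1:ℕ) ≤ (q.2:ℕ)) with hPdef
    set c : Fin N × Fin N → ℝ := fun q =>
      (Φ (Matrix.of fun x y =>
        if (x = q.1 ∧ y = q.2) ∨ (x = q.2 ∧ y = q.1) then (1:ℝ) else 0)) a b with hcdef
    set T : ℝ := ∑ q ∈ P, |c q| with hTdef
    have hT0 : 0 ≤ T := Finset.sum_nonneg fun q _ => abs_nonneg _
    -- entrywise representation
    have hrepr : ∀ ω, (Φ (W ω)) a b = ∑ q ∈ P, W ω q.1 q.2 * c q := by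
      intro ω
      conv_lhs => rw [← decomp_aux (W ω) (hWsymm ω)]
      rw [map_sum, Matrix.sum_apply]
      exact Finset.sum_congr rfl fun q _ => by
        rw [LinearMap.map_smul, Matrix.smul_apply, smul_eq_mul]
    -- T ≤ S
    have hTS : T ≤ S := by
      calc T ≤ ∑ q ∈ P, C₀ / (1 + (|((q.1:ℕ):ℝ) - ((a:ℕ):ℝ)|
            + |((q.2:ℕ):ℝ) - ((b:ℕ):ℝ)|) ^ s) := by
            refine Finset.sum_le_sum fun q hq => ?_
            have hq' : (q.1:ℕ) ≤ (q.2:ℕ) := (Finset.mem_filter.1 hq).2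
            exact hΦloc q.1 q.2 a b hq' hab
        _ ≤ ∑ q : Fin N × Fin N, C₀ / (1 + (|((q.1:ℕ):ℝ) - ((a:ℕ):ℝ)|
            + |((q.2:ℕ):ℝ) - ((b:ℕ):ℝ)|) ^ s) :=
            Finset.sum_le_sum_of_subset_of_nonneg (Finset.filter_subset _ _)
              (fun q _ _ => by positivity)
        _ ≤ ∑ q : Fin N × Fin N, (4 * C₀) *
              ((1 / (1 + |((q.1:ℕ):ℝ) - ((a:ℕ):ℝ)| ^ (s/2)))
                * (1 / (1 + |((q.2:ℕ):ℝ) - ((b:ℕ):ℝ)| ^ (s/2)))) := by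
            refine Finset.sum_le_sum fun q _ => ?_
            have hk := kernel_aux hs (abs_nonneg (((q.1:ℕ):ℝ) - ((a:ℕ):ℝ)))
              (abs_nonneg (((q.2:ℕ):ℝ) - ((b:ℕ):ℝ)))
            calc C₀ / (1 + (|((q.1:ℕ):ℝ) - ((a:ℕ):ℝ)| + |((q.2:ℕ):ℝ) - ((b:ℕ):ℝ)|) ^ s)
                = C₀ * (1 / (1 + (|((q.1:ℕ):ℝ) - ((a:ℕ):ℝ)|
                    + |((q.2:ℕ):ℝ) - ((b:ℕ):ℝ)|) ^ s)) := by ring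
              _ ≤ C₀ * (4 / ((1 + |((q.1:ℕ):ℝ) - ((a:ℕ):ℝ)| ^ (s/2))
                    * (1 + |((q.2:ℕ):ℝ) - ((b:ℕ):ℝ)| ^ (s/2)))) :=
                  mul_le_mul_of_nonneg_left hk hC₀.le
              _ = (4 * C₀) * ((1 / (1 + |((q.1:ℕ):ℝ) - ((a:ℕ):ℝ)| ^ (s/2)))
                    * (1 / (1 + |((q.2:ℕ):ℝ) - ((b:ℕ):ℝ)| ^ (s/2)))) := by
                  rw [one_div, one_div, ← mul_inv, ← one_div]; ring
        _ = (4 * C₀) * ((∑ i : Fin N, 1 / (1 + |((i:ℕ):ℝ) - ((a:ℕ):ℝ)| ^ (s/2)))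
              * (∑ k : Fin N, 1 / (1 + |((k:ℕ):ℝ) - ((b:ℕ):ℝ)| ^ (s/2)))) := by
            rw [← Finset.mul_sum, Fintype.sum_prod_type, Finset.sum_mul_sum]
        _ ≤ (4 * C₀) * ((2 * K) * (2 * K)) := by
            have h1 := row_sum_aux ht2 N (a:ℕ)
            have h2 := row_sum_aux ht2 N (b:ℕ)
            have hn1 : 0 ≤ ∑ i : Fin N, 1 / (1 + |((i:ℕ):ℝ) - ((a:ℕ):ℝ)| ^ (s/2)) :=
              Finset.sum_nonneg fun i _ => by positivity
            have hn2 : 0 ≤ ∑ k : Fin N, 1 / (1 + |((k:ℕ):ℝ) - ((b:ℕ):ℝ)| ^ (s/2)) :=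
              Finset.sum_nonneg fun k _ => by positivity
            have := mul_le_mul h1 h2 hn2 (by positivity)
            nlinarith
        _ = S := by rw [hSdef]; ring
    -- pointwise bound
    have hpt : ∀ ω, |(Φ (W ω)) a b| ^ p
        ≤ T ^ (p-1) * ∑ q ∈ P, |c q| * |W ω q.1 q.2| ^ p := by
      intro ω
      have h1 : |(Φ (W ω)) a b| ≤ ∑ q ∈ P, |c q| * |W ω q.1 q.2| := by
        rw [hrepr ω]
        refine (Finset.abs_sum_le_sum_abs _ _).trans (le_of_eq ?_)
        exact Finset.sum_congr rfl fun q _ => by rw [abs_mul]; ring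
      have h2 := Real.rpow_le_rpow (abs_nonneg _) h1 (by linarith : (0:ℝ) ≤ p)
      exact h2.trans (jensen_aux P (fun q => |c q|) (fun q => |W ω q.1 q.2|) hp
        (fun q _ => abs_nonneg _) (fun q _ => abs_nonneg _))
    have hGint : Integrable
        (fun ω => T ^ (p-1) * ∑ q ∈ P, |c q| * |W ω q.1 q.2| ^ p) μ :=
      (integrable_finset_sum P (fun q _ => (hWint q.1 q.2).const_mul _)).const_mul _
    have hNpow : (0:ℝ) ≤ (N:ℝ) ^ (-(p/2)) := Real.rpow_nonneg (Nat.cast_nonneg N) _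
    calc ∫ ω, |(Φ (W ω)) a b| ^ p ∂μ
        ≤ ∫ ω, T ^ (p-1) * ∑ q ∈ P, |c q| * |W ω q.1 q.2| ^ p ∂μ :=
          integral_mono_of_nonneg (Filter.Eventually.of_forall fun ω => by positivity)
            hGint (Filter.Eventually.of_forall hpt)
      _ = T ^ (p-1) * ∑ q ∈ P, |c q| * ∫ ω, |W ω q.1 q.2| ^ p ∂μ := by
          rw [integral_const_mul]
          congr 1
          rw [integral_finset_sum P (fun q _ => (hWint q.1 q.2).const_mul _)]
          exact Finset.sum_congr rfl fun q _ => integral_const_mul _ _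
      _ ≤ T ^ (p-1) * ∑ q ∈ P, |c q| * (Cp * (N:ℝ) ^ (-(p/2))) := by
          refine mul_le_mul_of_nonneg_left
            (Finset.sum_le_sum fun q _ =>
              mul_le_mul_of_nonneg_left (hWmom q.1 q.2) (abs_nonneg _))
            (Real.rpow_nonneg hT0 _)
      _ = T ^ (p-1) * (T * (Cp * (N:ℝ) ^ (-(p/2)))) := by rw [← Finset.sum_mul]
      _ ≤ S ^ (p-1) * (S * (Cp * (N:ℝ) ^ (-(p/2)))) := by
          have hM : 0 ≤ Cp * (N:ℝ) ^ (-(p/2)) := mul_nonneg hCp.le hNpow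
          exact mul_le_mul (Real.rpow_le_rpow hT0 hTS (by linarith))
            (mul_le_mul_of_nonneg_right hTS hM)
            (mul_nonneg hT0 hM) (Real.rpow_nonneg hS.le _)
      _ = S ^ p * Cp * (N:ℝ) ^ (-(p/2)) := by
          have hTp : S ^ (p-1) * S = S ^ p := by
            have h2 := Real.rpow_add hS (p-1) 1
            rw [Real.rpow_one, show p - 1 + 1 = p by ring] at h2
            exact h2.symm
          rw [← hTp]; ring
  rcases le_total (a:ℕ) (b:ℕ) with hab | hab
  · exact main a b hab
  · have he : (fun ω => |(Φ (W ω)) a b| ^ p) = fun ω => |(Φ (W ω)) b a| ^ p := by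
      funext ω
      rw [(hΦsym (W ω) (hWsymm ω)).apply b a]
    rw [he]
    exact main b a hab
end

section
/- Let N ≥ 1, c₀ > 0, and let 𝕋 = ℤ/Nℤ. Let F : 𝕋 × 𝕋 → ℂ satisfy F(x,y) = conj(F(y,x)) for all x, y ∈ 𝕋, and define the linear map Φ on N×N complex matrices indexed by 𝕋 by (Φ[R])_{ab} = ∑_{c,d ∈ 𝕋} F(a−c, b−d) R_{cd}. Assume that for all φ, θ ∈ [0,1] the discrete Fourier transform F̂(φ,θ) := ∑_{x,y ∈ 𝕋} F(x,y) · exp(2πi (x̃·φ − ỹ·θ)) is real and satisfies F̂(φ,θ) ≥ c₀, where x̃ ∈ {0,…,N−1} denotes the integer representative of x. Then for every Hermitian matrix R indexed by 𝕋 one has Tr(R · Φ[R]) ≥ c₀ · Tr(R²); equivalently, Φ ≥ c₀ on Hermitian matrices. -/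
/-!
Expand in the characters `ψ` of the finite group `𝕋² = ZMod N × ZMod N`. Because `R` is
Hermitian, `Tr(R Φ[R]) = ∑ₐ conj (R a) (F ∗ R) a`, and orthogonality of characters diagonalises
the convolution: `|𝕋²| Tr(R Φ[R]) = ∑_ψ F̂(ψ) |R̂(ψ)|²`, while Plancherel gives
`|𝕋²| Tr(R²) = ∑_ψ |R̂(ψ)|²`. Every character of `𝕋²` is `(x, y) ↦ exp (2πi (x̃φ - ỹθ))` for some
`φ, θ ∈ [0, 1]`, so the hypothesis `F̂ ≥ c₀` applies term by term.
-/

open Matrix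
open scoped ComplexConjugate

open Complex Real in
theorem AddChar.exists_zmod_apply_eq_exp {N : ℕ} [NeZero N] (χ : AddChar (ZMod N) ℂ) :
    ∃ φ ∈ Set.Icc (0 : ℝ) 1, ∀ x : ZMod N, χ x = cexp (2 * π * I * (x.val * φ)) := by
  have hpow : χ 1 ^ N = 1 := by
    rw [← AddChar.map_nsmul_eq_pow, nsmul_one, ZMod.natCast_self, AddChar.map_zero_eq_one]
  obtain ⟨i, hi, hχ⟩ := (isPrimitiveRoot_exp N (NeZero.ne N)).eq_pow_of_pow_eq_one hpow
  have hN : (0 : ℝ) < N := Nat.cast_pos.mpr (NeZero.pos N)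
  refine ⟨i / N, ⟨by positivity, div_le_one_of_le₀ (by exact_mod_cast hi.le) hN.le⟩, fun x => ?_⟩
  have hx : χ x = χ 1 ^ x.val := by
    rw [← AddChar.map_nsmul_eq_pow, nsmul_one, ZMod.natCast_zmod_val]
  rw [hx, ← hχ, ← pow_mul, ← Complex.exp_nat_mul]
  push_cast
  ring_nf

open Complex Real in
theorem AddChar.exists_zmod_apply_eq_exp_neg {N : ℕ} [NeZero N] (χ : AddChar (ZMod N) ℂ) :
    ∃ θ ∈ Set.Icc (0 : ℝ) 1, ∀ x : ZMod N, χ x = cexp (-(2 * π * I * (x.val * θ))) := by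
  obtain ⟨φ, ⟨hφ₀, hφ₁⟩, hχ⟩ := χ.exists_zmod_apply_eq_exp
  refine ⟨1 - φ, ⟨by linarith, by linarith⟩, fun x => ?_⟩
  rw [hχ, ← mul_one (cexp (-_)), ← exp_nat_mul_two_pi_mul_I x.val, ← Complex.exp_add]
  push_cast
  ring_nf

open Complex Real in
theorem AddChar.exists_zmod_prod_apply_eq_exp {N : ℕ} [NeZero N]
    (ψ : AddChar (ZMod N × ZMod N) ℂ) :
    ∃ φ ∈ Set.Icc (0 : ℝ) 1, ∃ θ ∈ Set.Icc (0 : ℝ) 1, ∀ x y : ZMod N,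
      ψ (x, y) = cexp (2 * π * I * (x.val * φ - y.val * θ)) := by
  obtain ⟨φ, hφ, h₁⟩ := (ψ.compAddMonoidHom (AddMonoidHom.inl _ _)).exists_zmod_apply_eq_exp
  obtain ⟨θ, hθ, h₂⟩ := (ψ.compAddMonoidHom (AddMonoidHom.inr _ _)).exists_zmod_apply_eq_exp_neg
  refine ⟨φ, hφ, θ, hθ, fun x y => ?_⟩
  have hsplit : ψ (x, y) = ψ (x, 0) * ψ (0, y) := by
    rw [← AddChar.map_add_eq_mul, Prod.mk_add_mk, add_zero, zero_add]
  rw [hsplit, ← AddMonoidHom.inl_apply, ← AddMonoidHom.inr_apply, ← AddChar.compAddMonoidHom_apply,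
    ← AddChar.compAddMonoidHom_apply, h₁, h₂, ← Complex.exp_add]
  ring_nf

section FiniteAbelian

open Finset

variable {G : Type*} [AddCommGroup G] [Fintype G]

/-- No conjugate on `ψ`, unlike `ZMod.dft`: this is the paper's `F̂`. -/
def charTransform (f : G → ℂ) (ψ : AddChar G ℂ) : ℂ := ∑ x, f x * ψ x

def convForm (f r : G → ℂ) : ℂ := ∑ a, conj (r a) * ∑ c, f (a - c) * r c

theorem charTransform_mul_normSq (f r : G → ℂ) (ψ : AddChar G ℂ) :
    charTransform f ψ * Complex.normSq (charTransform r ψ) =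
      ∑ a, ∑ c, ∑ x, f x * r c * conj (r a) * ψ (x + c - a) := by
  rw [Complex.normSq_eq_conj_mul_self, charTransform, charTransform, map_sum, sum_mul_sum]
  simp only [mul_sum, sum_mul]
  refine sum_congr rfl fun a _ => sum_congr rfl fun c _ => sum_congr rfl fun x _ => ?_
  rw [AddChar.map_sub_eq_div, AddChar.map_add_eq_mul, map_mul, ← AddChar.inv_apply_eq_conj]
  ring

theorem card_mul_convForm (f r : G → ℂ) :
    (Fintype.card G : ℂ) * convForm f r =
      ∑ ψ : AddChar G ℂ, charTransform f ψ * Complex.normSq (charTransform r ψ) := by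
  classical
  calc (Fintype.card G : ℂ) * convForm f r
      = ∑ a, ∑ c, ∑ x, f x * r c * conj (r a) *
          (if x + c - a = 0 then (Fintype.card G : ℂ) else 0) := by
        simp only [convForm, mul_sum]
        refine sum_congr rfl fun a _ => sum_congr rfl fun c _ => ?_
        simp only [sub_eq_zero, ← eq_sub_iff_add_eq, mul_ite, mul_zero, sum_ite_eq', mem_univ,
          if_true]
        ring
    _ = ∑ a, ∑ c, ∑ x, f x * r c * conj (r a) * ∑ ψ : AddChar G ℂ, ψ (x + c - a) := by
        simp only [AddChar.sum_apply_eq_ite]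
    _ = _ := by
        simp only [charTransform_mul_normSq, mul_sum]
        refine Eq.trans ?_ sum_comm
        refine sum_congr rfl fun a _ => ?_
        refine Eq.trans ?_ sum_comm
        refine sum_congr rfl fun c _ => ?_
        exact sum_comm

theorem card_mul_sum_normSq (r : G → ℂ) :
    (Fintype.card G : ℝ) * ∑ a, Complex.normSq (r a) =
      ∑ ψ : AddChar G ℂ, Complex.normSq (charTransform r ψ) := by
  classical
  have hδ (ψ : AddChar G ℂ) : charTransform (Pi.single 0 1) ψ = 1 := by
    simp [charTransform, Pi.single_apply]
  have hconv : convForm (Pi.single 0 1) r = ∑ a, (Complex.normSq (r a) : ℂ) := by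
    simp [convForm, Pi.single_apply, sub_eq_zero, Complex.normSq_eq_conj_mul_self]
  have h := card_mul_convForm (Pi.single 0 1) r
  simp only [hδ, hconv, one_mul] at h
  exact_mod_cast h

theorem convForm_im_eq_zero_and_le_re {f : G → ℂ} {c : ℝ}
    (hf : ∀ ψ : AddChar G ℂ, (charTransform f ψ).im = 0 ∧ c ≤ (charTransform f ψ).re)
    (r : G → ℂ) :
    (convForm f r).im = 0 ∧ c * ∑ a, Complex.normSq (r a) ≤ (convForm f r).re := by
  set S := ∑ ψ : AddChar G ℂ, (charTransform f ψ).re * Complex.normSq (charTransform r ψ)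
    with hS_def
  have hcard : (0 : ℝ) < Fintype.card G := Nat.cast_pos.mpr Fintype.card_pos
  have hS : (Fintype.card G : ℂ) * convForm f r = (S : ℂ) := by
    rw [card_mul_convForm, hS_def]
    push_cast
    refine sum_congr rfl fun ψ _ => ?_
    rw [Complex.conj_eq_iff_re.mp (Complex.conj_eq_iff_im.mpr (hf ψ).1)]
  have hre : (Fintype.card G : ℝ) * (convForm f r).re = S := by
    simpa using congrArg Complex.re hS
  have him : (Fintype.card G : ℝ) * (convForm f r).im = 0 := by
    simpa using congrArg Complex.im hS
  refine ⟨(mul_eq_zero.mp him).resolve_left hcard.ne', le_of_mul_le_mul_left ?_ hcard⟩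
  calc (Fintype.card G : ℝ) * (c * ∑ a, Complex.normSq (r a))
      = c * ∑ ψ : AddChar G ℂ, Complex.normSq (charTransform r ψ) := by
        rw [← card_mul_sum_normSq]; ring
    _ ≤ S := by
        rw [mul_sum]
        exact sum_le_sum fun ψ _ => mul_le_mul_of_nonneg_right (hf ψ).2 (Complex.normSq_nonneg _)
    _ = _ := hre.symm

end FiniteAbelian

theorem Matrix.trace_conjTranspose_mul_eq_sum {m n α : Type*} [Fintype m] [Fintype n]
    [AddCommMonoid α] [Mul α] [Star α] (A B : Matrix m n α) :
    (Aᴴ * B).trace = ∑ ij : m × n, star (A ij.1 ij.2) * B ij.1 ij.2 := by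
  simp only [trace, diag, mul_apply, conjTranspose_apply, Fintype.sum_prod_type]
  exact Finset.sum_comm

theorem Matrix.IsHermitian.trace_mul_eq_sum {n α : Type*} [Fintype n]
    [AddCommMonoid α] [Mul α] [Star α] {A : Matrix n n α} (hA : A.IsHermitian)
    (B : Matrix n n α) :
    (A * B).trace = ∑ ij : n × n, star (A ij.1 ij.2) * B ij.1 ij.2 := by
  simpa only [hA.eq] using trace_conjTranspose_mul_eq_sum A B

theorem convolution_filtering_lower_bound_general
    (N : ℕ) [NeZero N] (c₀ : ℝ)
    (F : ZMod N → ZMod N → ℂ)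
    (Φ : Matrix (ZMod N) (ZMod N) ℂ → Matrix (ZMod N) (ZMod N) ℂ)
    (hΦ : ∀ R : Matrix (ZMod N) (ZMod N) ℂ, ∀ a b : ZMod N,
      Φ R a b = ∑ c : ZMod N, ∑ d : ZMod N, F (a - c) (b - d) * R c d)
    (hFourier : ∀ φ θ : ℝ, φ ∈ Set.Icc (0:ℝ) 1 → θ ∈ Set.Icc (0:ℝ) 1 →
      (∑ x : ZMod N, ∑ y : ZMod N, F x y *
          Complex.exp (2 * Real.pi * Complex.I *
            (((x.val : ℕ) : ℂ) * (φ : ℂ) - ((y.val : ℕ) : ℂ) * (θ : ℂ)))).im = 0 ∧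
      c₀ ≤ (∑ x : ZMod N, ∑ y : ZMod N, F x y *
          Complex.exp (2 * Real.pi * Complex.I *
            (((x.val : ℕ) : ℂ) * (φ : ℂ) - ((y.val : ℕ) : ℂ) * (θ : ℂ)))).re) :
    ∀ R : Matrix (ZMod N) (ZMod N) ℂ, R.IsHermitian →
      ((R * Φ R).trace).im = 0 ∧
      c₀ * ((R * R).trace).re ≤ ((R * Φ R).trace).re := by
  intro R hR
  have hFhat : ∀ ψ : AddChar (ZMod N × ZMod N) ℂ, (charTransform (Function.uncurry F) ψ).im = 0 ∧
      c₀ ≤ (charTransform (Function.uncurry F) ψ).re := by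
    intro ψ
    obtain ⟨φ, hφ, θ, hθ, hψ⟩ := ψ.exists_zmod_prod_apply_eq_exp
    simpa only [charTransform, Fintype.sum_prod_type, Function.uncurry_apply_pair, hψ]
      using hFourier φ θ hφ hθ
  have hRΦR : (R * Φ R).trace = convForm (Function.uncurry F) (Function.uncurry R) := by
    rw [hR.trace_mul_eq_sum, convForm]
    refine Finset.sum_congr rfl fun A _ => ?_
    rw [hΦ, Fintype.sum_prod_type]
    rfl
  have hRR : ((R * R).trace).re = ∑ A : ZMod N × ZMod N, Complex.normSq (R A.1 A.2) := by
    simp [hR.trace_mul_eq_sum, Complex.normSq_apply]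
  rw [hRΦR, hRR]
  exact convForm_im_eq_zero_and_le_re hFhat (Function.uncurry R)

/-- A translation-invariant filtering on the discrete torus, given by convolution with a
kernel `F` satisfying `F(x,y) = conj F(y,x)`, is bounded below by `c₀` on Hermitian
matrices as soon as its discrete Fourier transform is bounded below by `c₀`:
`Tr(R·Φ[R]) ≥ c₀·Tr(R²)` for every Hermitian `R`. -/
theorem convolution_filtering_lower_bound
    (N : ℕ) [NeZero N] (c₀ : ℝ) (hc₀ : 0 < c₀)
    (F : ZMod N → ZMod N → ℂ)
    (hF : ∀ x y : ZMod N, F x y = conj (F y x))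
    (Φ : Matrix (ZMod N) (ZMod N) ℂ → Matrix (ZMod N) (ZMod N) ℂ)
    (hΦ : ∀ R : Matrix (ZMod N) (ZMod N) ℂ, ∀ a b : ZMod N,
      Φ R a b = ∑ c : ZMod N, ∑ d : ZMod N, F (a - c) (b - d) * R c d)
    (hFourier : ∀ φ θ : ℝ, φ ∈ Set.Icc (0:ℝ) 1 → θ ∈ Set.Icc (0:ℝ) 1 →
      (∑ x : ZMod N, ∑ y : ZMod N, F x y *
          Complex.exp (2 * Real.pi * Complex.I *
            (((x.val : ℕ) : ℂ) * (φ : ℂ) - ((y.val : ℕ) : ℂ) * (θ : ℂ)))).im = 0 ∧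
      c₀ ≤ (∑ x : ZMod N, ∑ y : ZMod N, F x y *
          Complex.exp (2 * Real.pi * Complex.I *
            (((x.val : ℕ) : ℂ) * (φ : ℂ) - ((y.val : ℕ) : ℂ) * (θ : ℂ)))).re) :
    ∀ R : Matrix (ZMod N) (ZMod N) ℂ, R.IsHermitian →
      ((R * Φ R).trace).im = 0 ∧
      c₀ * ((R * R).trace).re ≤ ((R * Φ R).trace).re :=
  convolution_filtering_lower_bound_general N c₀ F Φ hΦ hFourier
end

section
/- Let N ≥ 1, c₀ > 0, and α ∈ [0,1]. Let W^{(1)} = (w^{(1)}_{ab}) and W^{(2)} = (w^{(2)}_{ab}) be N×N real symmetric random matrices with centered, square-integrable entries such that: (i) the pairs {(w^{(1)}_{ab}, w^{(2)}_{ab}) : 1 ≤ a ≤ b ≤ N} form an independent family (i.e. entries attached to distinct index pairs {a,b} are independent, both within each matrix and between the two matrices); (ii) E[(w^{(j)}_{ab})²] ≥ c₀/N for j = 1,2 and all a ≤ b; (iii) |E[w^{(1)}_{ab} w^{(2)}_{ab}]| ≤ (1−α)·(E[(w^{(1)}_{ab})²])^{1/2}·(E[(w^{(2)}_{ab})²])^{1/2}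 for all a ≤ b. Then for all real symmetric N×N matrices R₁, R₂ one has E[ (Tr(R₁ W^{(1)}) + Tr(R₂ W^{(2)}))² ] ≥ (c₀ α / N) · (Tr(R₁²) + Tr(R₂²)). -/
/-!
Over the upper-triangular index pairs `p = (a, b)`, `a ≤ b`, symmetry gives
`Tr(R₁W⁽¹⁾) + Tr(R₂W⁽²⁾) = ∑ₚ mₚ Zₚ`, where `Zₚ = R₁ₚ W⁽¹⁾ₚ + R₂ₚ W⁽²⁾ₚ` and the multiplicity
`mₚ` is `1` on the diagonal and `2` off it. The `Zₚ` are independent and centred, so the second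
moment is `∑ₚ mₚ² E[Zₚ²] ≥ ∑ₚ mₚ E[Zₚ²]`. The decorrelation bound and AM-GM give
`E[Zₚ²] ≥ α (R₁ₚ² E[(W⁽¹⁾ₚ)²] + R₂ₚ² E[(W⁽²⁾ₚ)²]) ≥ (c₀α/N)(R₁ₚ² + R₂ₚ²)`,
and `∑ₚ mₚ (R₁ₚ² + R₂ₚ²) = Tr R₁² + Tr R₂²`.
-/

open MeasureTheory Matrix ProbabilityTheory

section UpperPairs

variable {ι M : Type*} [LinearOrder ι]

def pairMultiplicity (p : ι × ι) : ℕ := if p.1 = p.2 then 1 else 2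

theorem one_le_pairMultiplicity (p : ι × ι) : 1 ≤ pairMultiplicity p := by
  unfold pairMultiplicity
  split_ifs <;> norm_num

variable [Fintype ι] [AddCommMonoid M]

open Finset in
theorem sum_eq_sum_upperPairs (f : ι × ι → M) (hf : ∀ i j, f (i, j) = f (j, i)) :
    ∑ p, f p = ∑ p : {p : ι × ι // p.1 ≤ p.2}, pairMultiplicity p.1 • f p := by
  have lower_eq_upper : ∑ p ∈ univ.filter (fun p : ι × ι => ¬ p.1 ≤ p.2), f p
      = ∑ p ∈ univ.filter (fun p : ι × ι => p.1 < p.2), f p :=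
    sum_nbij' Prod.swap Prod.swap (by simp) (by simp) (by simp) (by simp)
      fun p _ => hf p.1 p.2
  have weight_split : ∀ p ∈ univ.filter (fun p : ι × ι => p.1 ≤ p.2),
      pairMultiplicity p • f p = f p + if p.1 < p.2 then f p else 0 := by
    intro p hp
    rcases (mem_filter.1 hp).2.lt_or_eq with h | h
    · simp [pairMultiplicity, h, h.ne, two_nsmul]
    · simp [pairMultiplicity, h]
  rw [← sum_filter_add_sum_filter_not univ (fun p : ι × ι => p.1 ≤ p.2), lower_eq_upper,
    ← sum_subtype (univ.filter fun p : ι × ι => p.1 ≤ p.2) (by simp)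
      (fun p => pairMultiplicity p • f p),
    sum_congr rfl weight_split, sum_add_distrib, ← sum_filter, filter_filter]
  congr 2
  ext p
  simpa using le_of_lt

theorem Matrix.IsSymm.trace_mul_eq_sum_upperPairs {R : Type*} [CommSemiring R]
    {A B : Matrix ι ι R} (hA : A.IsSymm) (hB : B.IsSymm) :
    (A * B).trace
      = ∑ p : {p : ι × ι // p.1 ≤ p.2}, pairMultiplicity p.1 • (A p.1.1 p.1.2 * B p.1.1 p.1.2) := by
  have trace_eq : (A * B).trace = ∑ p : ι × ι, A p.1 p.2 * B p.1 p.2 := by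
    simp only [trace, diag, mul_apply, Fintype.sum_prod_type, hB.apply]
  rw [trace_eq, sum_eq_sum_upperPairs _ fun i j => by rw [hA.apply, hB.apply]]

end UpperPairs

theorem mul_add_le_quadratic_of_abs_le_mul_sqrt {α A B C : ℝ} (hα : α ≤ 1) (hA : 0 ≤ A)
    (hC : 0 ≤ C) (hB : |B| ≤ (1 - α) * √A * √C) (r s : ℝ) :
    α * (r ^ 2 * A + s ^ 2 * C) ≤ r ^ 2 * A + 2 * r * s * B + s ^ 2 * C := by
  set u := |r| * √A
  set v := |s| * √C
  have hu : u ^ 2 = r ^ 2 * A := by rw [mul_pow, sq_abs, Real.sq_sqrt hA]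
  have hv : v ^ 2 = s ^ 2 * C := by rw [mul_pow, sq_abs, Real.sq_sqrt hC]
  have cross : |2 * r * s * B| ≤ (1 - α) * (2 * u * v) := by
    rw [abs_mul, abs_mul, abs_mul, abs_two]
    calc 2 * |r| * |s| * |B| ≤ 2 * |r| * |s| * ((1 - α) * √A * √C) := by gcongr
      _ = (1 - α) * (2 * u * v) := by ring
  have amgm : 2 * u * v ≤ u ^ 2 + v ^ 2 := two_mul_le_add_sq u v
  nlinarith [neg_abs_le (2 * r * s * B), mul_le_mul_of_nonneg_left amgm (sub_nonneg.2 hα)]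

section SecondMoments

variable {Ω : Type*} [MeasurableSpace Ω] {μ : Measure Ω}

theorem integral_sq_mul_add_mul {x y : Ω → ℝ} (hx : MemLp x 2 μ) (hy : MemLp y 2 μ) (r s : ℝ) :
    ∫ ω, (r * x ω + s * y ω) ^ 2 ∂μ
      = r ^ 2 * ∫ ω, x ω ^ 2 ∂μ + 2 * r * s * ∫ ω, x ω * y ω ∂μ + s ^ 2 * ∫ ω, y ω ^ 2 ∂μ := by
  have hxx : Integrable (fun ω => r ^ 2 * x ω ^ 2) μ := hx.integrable_sq.const_mul _
  have hxy : Integrable (fun ω => 2 * r * s * (x ω * y ω)) μ :=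
    (hx.integrable_mul hy).const_mul _
  have hyy : Integrable (fun ω => s ^ 2 * y ω ^ 2) μ := hy.integrable_sq.const_mul _
  rw [← integral_const_mul, ← integral_const_mul, ← integral_const_mul, ← integral_add hxx hxy,
    ← integral_add (f := fun ω => r ^ 2 * x ω ^ 2 + 2 * r * s * (x ω * y ω)) (hxx.add hxy) hyy]
  congr 1
  ext ω
  ring

theorem le_integral_sq_mul_add_mul {x y : Ω → ℝ} {σ α : ℝ}
    (hx : MemLp x 2 μ) (hy : MemLp y 2 μ) (hα₀ : 0 ≤ α) (hα₁ : α ≤ 1)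
    (hσx : σ ≤ ∫ ω, x ω ^ 2 ∂μ) (hσy : σ ≤ ∫ ω, y ω ^ 2 ∂μ)
    (hxy : |∫ ω, x ω * y ω ∂μ| ≤ (1 - α) * √(∫ ω, x ω ^ 2 ∂μ) * √(∫ ω, y ω ^ 2 ∂μ))
    (r s : ℝ) :
    σ * α * (r ^ 2 + s ^ 2) ≤ ∫ ω, (r * x ω + s * y ω) ^ 2 ∂μ := by
  have hA : 0 ≤ ∫ ω, x ω ^ 2 ∂μ := integral_nonneg fun ω => sq_nonneg _
  have hC : 0 ≤ ∫ ω, y ω ^ 2 ∂μ := integral_nonneg fun ω => sq_nonneg _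
  rw [integral_sq_mul_add_mul hx hy]
  refine le_trans ?_ (mul_add_le_quadratic_of_abs_le_mul_sqrt hα₁ hA hC hxy r s)
  have := mul_le_mul_of_nonneg_left hσx (sq_nonneg r)
  have := mul_le_mul_of_nonneg_left hσy (sq_nonneg s)
  nlinarith

variable [IsFiniteMeasure μ] {ι : Type*} {s : Finset ι} {Y : ι → Ω → ℝ}

theorem integral_sq_sum_of_pairwise_indepFun
    (hL2 : ∀ i ∈ s, MemLp (Y i) 2 μ) (hmean : ∀ i ∈ s, ∫ ω, Y i ω ∂μ = 0)
    (hindep : Set.Pairwise ↑s fun i j => IndepFun (Y i) (Y j) μ) :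
    ∫ ω, (∑ i ∈ s, Y i ω) ^ 2 ∂μ = ∑ i ∈ s, ∫ ω, Y i ω ^ 2 ∂μ := by
  have hsum_mean : ∫ ω, (∑ i ∈ s, Y i) ω ∂μ = 0 := by
    simp only [Finset.sum_apply]
    rw [integral_finsetSum _ fun i hi => (hL2 i hi).integrable one_le_two]
    exact Finset.sum_eq_zero hmean
  have hsum_meas : AEMeasurable (∑ i ∈ s, Y i) μ :=
    (memLp_finsetSum' _ hL2).aestronglyMeasurable.aemeasurable
  have hvar := IndepFun.variance_sum hL2 hindep
  rw [variance_of_integral_eq_zero hsum_meas hsum_mean] at hvar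
  simp only [Finset.sum_apply] at hvar
  rw [hvar]
  exact Finset.sum_congr rfl fun i hi =>
    variance_of_integral_eq_zero (hL2 i hi).aestronglyMeasurable.aemeasurable (hmean i hi)

theorem sum_mul_integral_sq_le_integral_sq_sum {m : ι → ℝ} (hm : ∀ i ∈ s, 1 ≤ m i)
    (hL2 : ∀ i ∈ s, MemLp (Y i) 2 μ) (hmean : ∀ i ∈ s, ∫ ω, Y i ω ∂μ = 0)
    (hindep : Set.Pairwise ↑s fun i j => IndepFun (Y i) (Y j) μ) :
    ∑ i ∈ s, m i * ∫ ω, Y i ω ^ 2 ∂μ ≤ ∫ ω, (∑ i ∈ s, m i * Y i ω) ^ 2 ∂μ := by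
  rw [integral_sq_sum_of_pairwise_indepFun (fun i hi => (hL2 i hi).const_mul (m i))
    (fun i hi => by rw [integral_const_mul, hmean i hi, mul_zero])
    (hindep.mono' fun i j hij =>
      hij.comp (measurable_const_mul (m i)) (measurable_const_mul (m j)))]
  gcongr with i hi
  rw [funext fun ω => mul_pow (m i) (Y i ω) 2, integral_const_mul]
  exact mul_le_mul_of_nonneg_right (le_self_pow₀ (hm i hi) two_ne_zero)
    (integral_nonneg fun ω => sq_nonneg _)

end SecondMoments

theorem joint_covariance_tensor_lower_bound_general
    {Ω : Type*} [MeasurableSpace Ω] (μ : Measure Ω) [IsProbabilityMeasure μ]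
    (N : ℕ) (c₀ α : ℝ) (hα : α ∈ Set.Icc (0:ℝ) 1)
    (W₁ W₂ : Ω → Matrix (Fin N) (Fin N) ℝ)
    (hsymm₁ : ∀ ω, (W₁ ω).IsSymm) (hsymm₂ : ∀ ω, (W₂ ω).IsSymm)
    (hL2₁ : ∀ a b, MemLp (fun ω => W₁ ω a b) 2 μ)
    (hL2₂ : ∀ a b, MemLp (fun ω => W₂ ω a b) 2 μ)
    (hmean₁ : ∀ a b, ∫ ω, W₁ ω a b ∂μ = 0)
    (hmean₂ : ∀ a b, ∫ ω, W₂ ω a b ∂μ = 0)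
    (hindep : iIndepFun
      (fun p : {p : Fin N × Fin N // p.1 ≤ p.2} =>
        fun ω => (W₁ ω p.1.1 p.1.2, W₂ ω p.1.1 p.1.2)) μ)
    (hvar₁ : ∀ a b : Fin N, a ≤ b → c₀ / N ≤ ∫ ω, (W₁ ω a b)^2 ∂μ)
    (hvar₂ : ∀ a b : Fin N, a ≤ b → c₀ / N ≤ ∫ ω, (W₂ ω a b)^2 ∂μ)
    (hdecorr : ∀ a b : Fin N, a ≤ b →
      |∫ ω, W₁ ω a b * W₂ ω a b ∂μ| ≤
        (1 - α) * Real.sqrt (∫ ω, (W₁ ω a b)^2 ∂μ) * Real.sqrt (∫ ω, (W₂ ω a b)^2 ∂μ)) :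
    ∀ R₁ R₂ : Matrix (Fin N) (Fin N) ℝ, R₁.IsSymm → R₂.IsSymm →
      (c₀ * α / N) * ((R₁ * R₁).trace + (R₂ * R₂).trace) ≤
        ∫ ω, ((R₁ * W₁ ω).trace + (R₂ * W₂ ω).trace)^2 ∂μ := by
  intro R₁ R₂ hR₁ hR₂
  let m (p : {p : Fin N × Fin N // p.1 ≤ p.2}) : ℝ := pairMultiplicity p.1
  let Z (p : {p : Fin N × Fin N // p.1 ≤ p.2}) (ω : Ω) : ℝ :=
    R₁ p.1.1 p.1.2 * W₁ ω p.1.1 p.1.2 + R₂ p.1.1 p.1.2 * W₂ ω p.1.1 p.1.2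
  have hZ_L2 (p) : MemLp (Z p) 2 μ := ((hL2₁ _ _).const_mul _).add ((hL2₂ _ _).const_mul _)
  have hZ_mean (p) : ∫ ω, Z p ω ∂μ = 0 := by
    rw [integral_add ((hL2₁ _ _).integrable one_le_two |>.const_mul _)
      ((hL2₂ _ _).integrable one_le_two |>.const_mul _), integral_const_mul, integral_const_mul,
      hmean₁, hmean₂, mul_zero, mul_zero, add_zero]
  have hZ_indep : Pairwise fun p q => IndepFun (Z p) (Z q) μ := fun p q hpq =>
    (hindep.comp (fun p z => R₁ p.1.1 p.1.2 * z.1 + R₂ p.1.1 p.1.2 * z.2)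
      fun p => by fun_prop).indepFun hpq
  calc c₀ * α / N * ((R₁ * R₁).trace + (R₂ * R₂).trace)
      = ∑ p, m p * (c₀ / N * α * (R₁ p.1.1 p.1.2 ^ 2 + R₂ p.1.1 p.1.2 ^ 2)) := by
        simp only [hR₁.trace_mul_eq_sum_upperPairs hR₁, hR₂.trace_mul_eq_sum_upperPairs hR₂,
          ← Finset.sum_add_distrib, Finset.mul_sum, nsmul_eq_mul, m]
        exact Finset.sum_congr rfl fun p _ => by ring
    _ ≤ ∑ p, m p * ∫ ω, Z p ω ^ 2 ∂μ := by
        gcongr with p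
        exact le_integral_sq_mul_add_mul (hL2₁ _ _) (hL2₂ _ _) hα.1 hα.2
          (hvar₁ _ _ p.2) (hvar₂ _ _ p.2) (hdecorr _ _ p.2) _ _
    _ ≤ ∫ ω, (∑ p, m p * Z p ω) ^ 2 ∂μ :=
        sum_mul_integral_sq_le_integral_sq_sum
          (fun p _ => Nat.one_le_cast.2 (one_le_pairMultiplicity p.1)) (fun p _ => hZ_L2 p)
          (fun p _ => hZ_mean p) fun p _ q _ hpq => hZ_indep hpq
    _ = ∫ ω, ((R₁ * W₁ ω).trace + (R₂ * W₂ ω).trace) ^ 2 ∂μ := by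
        congr with ω
        rw [hR₁.trace_mul_eq_sum_upperPairs (hsymm₁ ω), hR₂.trace_mul_eq_sum_upperPairs (hsymm₂ ω),
          ← Finset.sum_add_distrib]
        simp only [nsmul_eq_mul, m, Z, mul_add]

/-- Quantitative lower bound on the joint covariance tensor of a coupled pair of
Wigner-type matrices: with variances at least `c₀/N` and decorrelation parameter `α`,
`E[(Tr(R₁W⁽¹⁾) + Tr(R₂W⁽²⁾))²] ≥ (c₀α/N)(Tr R₁² + Tr R₂²)` for all symmetric `R₁, R₂`.
This is the operator bound `Σ^{(1,2)} ≳ α/N` replacing the fullness condition. -/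
theorem joint_covariance_tensor_lower_bound
    {Ω : Type*} [MeasurableSpace Ω] (μ : Measure Ω) [IsProbabilityMeasure μ]
    (N : ℕ) (hN : 1 ≤ N) (c₀ α : ℝ) (hc₀ : 0 < c₀) (hα : α ∈ Set.Icc (0:ℝ) 1)
    (W₁ W₂ : Ω → Matrix (Fin N) (Fin N) ℝ)
    (hsymm₁ : ∀ ω, (W₁ ω).IsSymm) (hsymm₂ : ∀ ω, (W₂ ω).IsSymm)
    (hL2₁ : ∀ a b, MemLp (fun ω => W₁ ω a b) 2 μ)
    (hL2₂ : ∀ a b, MemLp (fun ω => W₂ ω a b) 2 μ)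
    (hmean₁ : ∀ a b, ∫ ω, W₁ ω a b ∂μ = 0)
    (hmean₂ : ∀ a b, ∫ ω, W₂ ω a b ∂μ = 0)
    (hindep : iIndepFun
      (fun p : {p : Fin N × Fin N // p.1 ≤ p.2} =>
        fun ω => (W₁ ω p.1.1 p.1.2, W₂ ω p.1.1 p.1.2)) μ)
    (hvar₁ : ∀ a b : Fin N, a ≤ b → c₀ / N ≤ ∫ ω, (W₁ ω a b)^2 ∂μ)
    (hvar₂ : ∀ a b : Fin N, a ≤ b → c₀ / N ≤ ∫ ω, (W₂ ω a b)^2 ∂μ)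
    (hdecorr : ∀ a b : Fin N, a ≤ b →
      |∫ ω, W₁ ω a b * W₂ ω a b ∂μ| ≤
        (1 - α) * Real.sqrt (∫ ω, (W₁ ω a b)^2 ∂μ) * Real.sqrt (∫ ω, (W₂ ω a b)^2 ∂μ)) :
    ∀ R₁ R₂ : Matrix (Fin N) (Fin N) ℝ, R₁.IsSymm → R₂.IsSymm →
      (c₀ * α / N) * ((R₁ * R₁).trace + (R₂ * R₂).trace) ≤
        ∫ ω, ((R₁ * W₁ ω).trace + (R₂ * W₂ ω).trace)^2 ∂μ :=
  joint_covariance_tensor_lower_bound_general μ N c₀ α hα W₁ W₂ hsymm₁ hsymm₂ hL2₁ hL2₂ hmean₁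
    hmean₂ hindep hvar₁ hvar₂ hdecorr
end
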